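/- arXiv:1312.7540 — 3 statements merged into one kernel-verified Lean document; each statement's English description precedes it below -/
import Mathlib

section
/- Let 𝓐 be a central hyperplane arrangement of rank l and let X be a modular coatom of L(𝓐). If the localization 𝓐_X is inductively free with coexponents 0, m_1,…,m_{l-1}, then 𝓐 is inductively free with coexponents m_1,…,m_{l-1}, m_l, where m_l = |𝓐| − |𝓐_X|. -/
noncomputable section
open scoped RealInnerProductSpace Classical

namespace Paper

abbrev V (n : ℕ) := EuclideanSpace ℝ (Fin n)
abbrev O (n : ℕ) := V n ≃ₗᵢ[ℝ] V n

/-- The orthogonal reflection through the hyperplane orthogonal to `β`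
(the identity if `β = 0`). -/
def sref (n : ℕ) (β : V n) : O n := Submodule.reflection ((ℝ ∙ β)ᗮ)

/-- A (finite, reduced) root system in Euclidean space `ℝⁿ`, together with a choice of
simple roots, realizing a finite Coxeter group geometrically. -/
structure RS (n : ℕ) where
  rank : ℕ
  Δ : Fin rank → V n
  R : Finset (V n)
  ne_zero : ∀ β ∈ R, β ≠ (0 : V n)
  simple_mem : ∀ i, Δ i ∈ R
  indep : LinearIndependent ℝ Δ
  reflect_mem : ∀ β ∈ R, ∀ γ ∈ R, sref n β γ ∈ R
  reduced : ∀ β ∈ R, ∀ c : ℝ, c • β ∈ R → c = 1 ∨ c = -1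
  pos_or_neg : ∀ β ∈ R,
    (∃ c : Fin rank → ℝ, (∀ i, 0 ≤ c i) ∧ β = ∑ i, c i • Δ i) ∨
    (∃ c : Fin rank → ℝ, (∀ i, 0 ≤ c i) ∧ -β = ∑ i, c i • Δ i)

variable {n : ℕ}

/-- The crystallographic (Weyl) condition. -/
def RS.IsWeyl (P : RS n) : Prop :=
  ∀ β ∈ P.R, ∀ γ ∈ P.R, ∃ k : ℤ, 2 * (inner ℝ β γ : ℝ) = (k : ℝ) * (inner ℝ β β : ℝ)

/-- The simple reflections. -/
def RS.s (P : RS n) (i : Fin P.rank) : O n := sref n (P.Δ i)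

/-- The Coxeter/Weyl group: the group generated by the simple reflections. -/
def RS.W (P : RS n) : Subgroup (O n) := Subgroup.closure (Set.range P.s)

/-- Length with respect to the simple reflections. -/
def RS.len (P : RS n) (w : O n) : ℕ :=
  sInf {k | ∃ f : Fin k → Fin P.rank, w = (List.ofFn fun j => P.s (f j)).prod}

/-- A vector is positive if it is a nonnegative combination of the simple roots. -/
def RS.IsPos (P : RS n) (β : V n) : Prop :=
  ∃ c : Fin P.rank → ℝ, (∀ i, 0 ≤ c i) ∧ β = ∑ i, c i • P.Δ i

/-- The inversion set of `w` : positive roots sent to negative roots by `w⁻¹`. -/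
def RS.invSet (P : RS n) (w : O n) : Set (V n) :=
  {β | β ∈ P.R ∧ P.IsPos β ∧ P.IsPos (-(w⁻¹ β))}

/-- The inversion set of `w`, as a finite set. -/
def RS.invFinset (P : RS n) (w : O n) : Finset (V n) :=
  P.R.filter fun β => P.IsPos β ∧ P.IsPos (-(w⁻¹ β))

/-- Reflections: the reflections through the roots. -/
def RS.IsRef (P : RS n) (t : O n) : Prop := ∃ β ∈ P.R, t = sref n β

/-- Bruhat order. -/
def RS.bruhatLE (P : RS n) (u w : O n) : Prop :=
  Relation.ReflTransGen (fun x y => P.len x < P.len y ∧ ∃ t, P.IsRef t ∧ y = t * x) u w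

/-- The Poincaré polynomial of `w` : the length generating function of the
Bruhat interval `[e,w]`. -/
def RS.poin (P : RS n) (w : O n) : Polynomial ℤ :=
  ∑ᶠ x ∈ {x : O n | P.bruhatLE x w}, Polynomial.X ^ P.len x

/-- `w` is rationally smooth iff its Poincaré polynomial is palindromic. -/
def RS.RatSmooth (P : RS n) (w : O n) : Prop :=
  ∀ i ≤ P.len w, (P.poin w).coeff i = (P.poin w).coeff (P.len w - i)

/-- The `q`-integer `[m]_q = 1 + q + ⋯ + q^(m-1)`. -/
def qint (m : ℕ) : Polynomial ℤ := ∑ j ∈ Finset.range m, Polynomial.X ^ j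

/-- The support of `w`: simple reflections occurring in some reduced word for `w`. -/
def RS.supp (P : RS n) (w : O n) : Set (Fin P.rank) :=
  {i | ∃ (k : ℕ) (f : Fin k → Fin P.rank), k = P.len w ∧
    w = (List.ofFn fun j => P.s (f j)).prod ∧ ∃ j, f j = i}

/-- The standard parabolic subgroup generated by `J`. -/
def RS.WJ (P : RS n) (J : Set (Fin P.rank)) : Subgroup (O n) :=
  Subgroup.closure (P.s '' J)

/-- `v` is a minimal length right coset representative (`v ∈ ᴶW`). -/
def RS.MinRight (P : RS n) (J : Set (Fin P.rank)) (v : O n) : Prop :=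
  ∀ i ∈ J, P.len v < P.len (P.s i * v)

/-- `v` is a minimal length left coset representative (`v ∈ Wᴶ`). -/
def RS.MinLeft (P : RS n) (J : Set (Fin P.rank)) (v : O n) : Prop :=
  ∀ i ∈ J, P.len v < P.len (v * P.s i)

/-- The Poincaré polynomial `ᴶP_v`, summing over `[e,v] ∩ ᴶW`. -/
def RS.poinRight (P : RS n) (J : Set (Fin P.rank)) (v : O n) : Polynomial ℤ :=
  ∑ᶠ x ∈ {x : O n | P.bruhatLE x v ∧ P.MinRight J x}, Polynomial.X ^ P.len x

/-- The Poincaré polynomial `P_v^J`, summing over `[e,v] ∩ Wᴶ`. -/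
def RS.poinLeft (P : RS n) (J : Set (Fin P.rank)) (v : O n) : Polynomial ℤ :=
  ∑ᶠ x ∈ {x : O n | P.bruhatLE x v ∧ P.MinLeft J x}, Polynomial.X ^ P.len x

/-- `[e,v] ∩ ᴶW` is a chain in Bruhat order. -/
def RS.ChainRight (P : RS n) (J : Set (Fin P.rank)) (v : O n) : Prop :=
  ∀ x y : O n, (P.bruhatLE x v ∧ P.MinRight J x) → (P.bruhatLE y v ∧ P.MinRight J y) →
    P.bruhatLE x y ∨ P.bruhatLE y x

/-- `[e,v] ∩ Wᴶ` is a chain in Bruhat order. -/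
def RS.ChainLeft (P : RS n) (J : Set (Fin P.rank)) (v : O n) : Prop :=
  ∀ x y : O n, (P.bruhatLE x v ∧ P.MinLeft J x) → (P.bruhatLE y v ∧ P.MinLeft J y) →
    P.bruhatLE x y ∨ P.bruhatLE y x

/-- `w = u * v` is a (nontrivial) left chain Billey–Postnikov decomposition w.r.t. `J`. -/
def RS.LeftChainBP (P : RS n) (J : Set (Fin P.rank)) (u v w : O n) : Prop :=
  w = u * v ∧ u ∈ P.WJ J ∧ P.MinRight J v ∧ v ≠ 1 ∧
    P.poin w = P.poin u * P.poinRight J v ∧ P.ChainRight J v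

/-- `w = v * u` is a (nontrivial) right chain Billey–Postnikov decomposition w.r.t. `J`. -/
def RS.RightChainBP (P : RS n) (J : Set (Fin P.rank)) (u v w : O n) : Prop :=
  w = v * u ∧ u ∈ P.WJ J ∧ P.MinLeft J v ∧ v ≠ 1 ∧
    P.poin w = P.poin u * P.poinLeft J v ∧ P.ChainLeft J v

/-- `w` has a complete chain BP decomposition. -/
inductive RS.CCBP (P : RS n) : O n → Prop
  | one : RS.CCBP P 1
  | left (J : Set (Fin P.rank)) (u v w : O n) :
      P.LeftChainBP J u v w → RS.CCBP P u → RS.CCBP P w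
  | right (J : Set (Fin P.rank)) (u v w : O n) :
      P.RightChainBP J u v w → RS.CCBP P u → RS.CCBP P w

/-! ### Hyperplane arrangements -/

/-- A central hyperplane arrangement in `ℝⁿ`, given as a finite set of linear subspaces. -/
abbrev Arr (n : ℕ) := Finset (Submodule ℝ (V n))

def IsHyperplane (H : Submodule ℝ (V n)) : Prop := ∃ β : V n, β ≠ 0 ∧ H = (ℝ ∙ β)ᗮ

/-- The inversion hyperplane arrangement of `w`. -/
def RS.invArr (P : RS n) (w : O n) : Arr n :=
  (P.invFinset w).image fun β => (ℝ ∙ β)ᗮ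

abbrev Poly (n : ℕ) := MvPolynomial (Fin n) ℝ
abbrev Der (n : ℕ) := Derivation ℝ (Poly n) (Poly n)

/-- The defining linear form of the hyperplane orthogonal to `β`. -/
def linForm (β : V n) : Poly n := ∑ i, MvPolynomial.C (β i) * MvPolynomial.X i

/-- The module of derivations preserving each defining ideal of the arrangement. -/
def derSubmodule (A : Arr n) : Submodule (Poly n) (Der n) where
  carrier := {θ | ∀ H ∈ A, ∀ β : V n, H = (ℝ ∙ β)ᗮ → θ (linForm β) ∈ Ideal.span {linForm β}}
  add_mem' := by
    intro a b ha hb H hH β hβ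
    simpa using Ideal.add_mem _ (ha H hH β hβ) (hb H hH β hβ)
  zero_mem' := by
    intro H hH β hβ
    simp
  smul_mem' := by
    intro c θ hθ H hH β hβ
    simpa [smul_eq_mul] using Ideal.mul_mem_left _ c (hθ H hH β hβ)

/-- A derivation is homogeneous of (polynomial) degree `d`. -/
def IsHomogOfDeg (θ : Der n) (d : ℕ) : Prop :=
  ∀ i : Fin n, MvPolynomial.IsHomogeneous (θ (MvPolynomial.X i)) d

/-- The arrangement is free, with coexponents `d` (zero coexponents corresponding to
the center included). -/
def FreeWithCoexp (A : Arr n) (d : Fin n → ℕ) : Prop :=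
  ∃ b : Module.Basis (Fin n) (Poly n) (derSubmodule A), ∀ i, IsHomogOfDeg ((b i : Der n)) (d i)

/-- The arrangement is free: its module of derivations is free. -/
def IsFree (A : Arr n) : Prop := ∃ d : Fin n → ℕ, FreeWithCoexp A d

/-- The intersection lattice of the arrangement. -/
def flats (A : Arr n) : Set (Submodule ℝ (V n)) :=
  {X | ∃ S : Finset (Submodule ℝ (V n)), S ⊆ A ∧ X = S.inf id}

/-- The rank (codimension) of a flat. -/
def flatRk (X : Submodule ℝ (V n)) : ℕ := n - Module.finrank ℝ X

/-- The rank of the arrangement: the codimension of its center. -/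
def arrRank (A : Arr n) : ℕ := flatRk (A.inf id)

/-- The join of two flats in the intersection lattice: the smallest flat
containing both. -/
def closJoin (A : Arr n) (X Y : Submodule ℝ (V n)) : Submodule ℝ (V n) :=
  (A.filter fun H => X ≤ H ∧ Y ≤ H).inf id

/-- `X` is a modular element of the intersection lattice. -/
def IsModularFlat (A : Arr n) (X : Submodule ℝ (V n)) : Prop :=
  X ∈ flats A ∧ ∀ Y ∈ flats A,
    flatRk X + flatRk Y = flatRk (X ⊓ Y) + flatRk (closJoin A X Y)

/-- The localization of the arrangement at the flat `X`. -/
def locAt (A : Arr n) (X : Submodule ℝ (V n)) : Arr n :=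
  A.filter fun H => X ≤ H

/-- The arrangement is supersolvable: its intersection lattice has a maximal chain
of modular elements. -/
def Supersolvable (A : Arr n) : Prop :=
  ∃ c : ℕ → Submodule ℝ (V n),
    (∀ i ≤ arrRank A, c i ∈ flats A ∧ IsModularFlat A (c i) ∧ flatRk (c i) = i) ∧
    ∀ i < arrRank A, c (i + 1) ≤ c i

/-- Inductive freeness, with the multiset of coexponents. -/
inductive IndFree : (n : ℕ) → Arr n → Multiset ℕ → Prop
  | empty (n : ℕ) : IndFree n ∅ (Multiset.replicate n 0)
  | step (n : ℕ) (A : Arr (n + 1)) (H : Submodule ℝ (V (n + 1))) (hH : H ∈ A)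
      (D : Multiset ℕ) (d : ℕ) (hd : 1 ≤ d)
      (e : H ≃ₗᵢ[ℝ] V n)
      (hdel : IndFree (n + 1) (A.erase H) ((d - 1) ::ₘ D))
      (hres : IndFree n ((A.erase H).image fun H' =>
          Submodule.map (e.toLinearEquiv : ↥H →ₗ[ℝ] V n) (Submodule.comap H.subtype H')) D) :
      IndFree (n + 1) A (d ::ₘ D)

/-! ### nbc sets for arrangements given by normal vectors -/

def IsDepSet (S : Finset (V n)) : Prop :=
  ¬ LinearIndependent ℝ (fun β : (S : Set (V n)) => (β : V n))

def IsMinDep (S : Finset (V n)) : Prop :=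
  IsDepSet S ∧ ∀ T : Finset (V n), T ⊂ S → ¬ IsDepSet T

/-- `B` is a broken circuit of `A` with respect to the order `ord`. -/
def IsBC (ord : V n → ℕ) (A B : Finset (V n)) : Prop :=
  B ⊆ A ∧ ∃ β ∈ A, (∀ γ ∈ B, ord γ < ord β) ∧ IsMinDep (insert β B)

/-- `S` is an nbc-set of `A` with respect to the order `ord`. -/
def IsNBC (ord : V n → ℕ) (A S : Finset (V n)) : Prop :=
  S ⊆ A ∧ ∀ B ⊆ S, ¬ IsBC ord A B

/-- The Poincaré polynomial of the arrangement with normals `A` : the generating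
function of nbc-sets. -/
def nbcPoly (ord : V n → ℕ) (A : Finset (V n)) : Polynomial ℤ :=
  ∑ᶠ S ∈ {S : Finset (V n) | IsNBC ord A S}, Polynomial.X ^ S.card

/-! ### Bruhat graph distance, absolute length, HLSS -/

/-- Directed distance in the Bruhat graph. -/
def RS.bgDist (P : RS n) (u w : O n) : ℕ :=
  sInf {m | ∃ c : ℕ → O n, c 0 = u ∧ c m = w ∧
    ∀ i < m, P.len (c i) < P.len (c (i + 1)) ∧ ∃ t, P.IsRef t ∧ c (i + 1) = t * c i}

/-- Absolute (reflection) length. -/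
def RS.absLen (P : RS n) (x : O n) : ℕ :=
  sInf {m | ∃ g : Fin m → O n, (∀ i, P.IsRef (g i)) ∧ x = (List.ofFn g).prod}

/-- The HLSS condition. -/
def RS.HLSS (P : RS n) (w : O n) : Prop :=
  ∀ u, P.bruhatLE u w → P.bgDist u w = P.absLen (u * w⁻¹)

/-- The fixed point subspace of `w`. -/
def fixedSpace (w : O n) : Submodule ℝ (V n) :=
  LinearMap.eqLocus (w.toLinearEquiv : V n →ₗ[ℝ] V n) LinearMap.id

/-! ### Relative versions, for reflection subgroups `W_U` (flattening) -/

/-- Inversion set relative to a set `R'` of roots. -/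
def RS.invIn (P : RS n) (R' : Set (V n)) (x : O n) : Set (V n) :=
  {β | β ∈ R' ∧ P.IsPos β ∧ P.IsPos (-(x⁻¹ β))}

/-- Length in the reflection subgroup attached to `R'`: the number of inversions. -/
def RS.lenIn (P : RS n) (R' : Set (V n)) (x : O n) : ℕ := Nat.card (P.invIn R' x)

def RS.refIn (P : RS n) (R' : Set (V n)) (t : O n) : Prop := ∃ β ∈ R', t = sref n β

/-- The reflection subgroup attached to `R'`. -/
def RS.WIn (P : RS n) (R' : Set (V n)) : Subgroup (O n) :=
  Subgroup.closure {t | P.refIn R' t}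

def RS.bruhatIn (P : RS n) (R' : Set (V n)) (u w : O n) : Prop :=
  Relation.ReflTransGen
    (fun x y => P.lenIn R' x < P.lenIn R' y ∧ ∃ t, P.refIn R' t ∧ y = t * x) u w

def RS.bgDistIn (P : RS n) (R' : Set (V n)) (u w : O n) : ℕ :=
  sInf {m | ∃ c : ℕ → O n, c 0 = u ∧ c m = w ∧
    ∀ i < m, P.lenIn R' (c i) < P.lenIn R' (c (i + 1)) ∧
      ∃ t, P.refIn R' t ∧ c (i + 1) = t * c i}

def RS.absLenIn (P : RS n) (R' : Set (V n)) (x : O n) : ℕ :=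
  sInf {m | ∃ g : Fin m → O n, (∀ i, P.refIn R' (g i)) ∧ x = (List.ofFn g).prod}

def RS.HLSSIn (P : RS n) (R' : Set (V n)) (w : O n) : Prop :=
  ∀ u, P.bruhatIn R' u w → P.bgDistIn R' u w = P.absLenIn R' (u * w⁻¹)

/-! ### Convex order and the map φ -/

/-- The inversions of `w` listed according to a reduced word `ω`:
`β_i = s_1 ⋯ s_{i-1} α_{s_i}`. -/
def RS.wordβ (P : RS n) (ω : List (Fin P.rank)) (i : Fin ω.length) : V n :=
  (((ω.take i).map P.s).prod) (P.Δ (ω.get i))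

/-- The map `φ` sending a subset of the inversion set to an element of `[e,w]`. -/
def RS.wordφ (P : RS n) (ω : List (Fin P.rank)) (w : O n)
    (S : Finset (Fin ω.length)) : O n :=
  (((S.sort (· ≤ ·)).map fun i => sref n (P.wordβ ω i)).prod) * w

def RS.wordDep (P : RS n) (ω : List (Fin P.rank)) (T : Finset (Fin ω.length)) : Prop :=
  ¬ LinearIndependent ℝ (fun i : {x // x ∈ T} => P.wordβ ω i.1)

def RS.wordMinDep (P : RS n) (ω : List (Fin P.rank)) (T : Finset (Fin ω.length)) : Prop :=
  P.wordDep ω T ∧ ∀ T' : Finset (Fin ω.length), T' ⊂ T → ¬ P.wordDep ω T'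

/-- `B` is a broken circuit with respect to the convex order given by `ω`. -/
def RS.wordBC (P : RS n) (ω : List (Fin P.rank)) (B : Finset (Fin ω.length)) : Prop :=
  ∃ m : Fin ω.length, (∀ j ∈ B, j < m) ∧ P.wordMinDep ω (insert m B)

/-- `S` is an nbc-set with respect to the convex order given by `ω`. -/
def RS.wordNBC (P : RS n) (ω : List (Fin P.rank)) (S : Finset (Fin ω.length)) : Prop :=
  ∀ B ⊆ S, ¬ P.wordBC ω B

/-! ### Auxiliary lemmas for the modular-coatom induction -/

lemma finrank_V (n : ℕ) : Module.finrank ℝ (V n) = n := finrank_euclideanSpace_fin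

lemma IsHyperplane.finrank_succ {H : Submodule ℝ (V n)} (h : IsHyperplane H) :
    Module.finrank ℝ H + 1 = n := by
  obtain ⟨β, hβ, rfl⟩ := h
  have h1 : Module.finrank ℝ (ℝ ∙ β) = 1 := finrank_span_singleton hβ
  have h2 := Submodule.finrank_add_finrank_orthogonal (𝕜 := ℝ) (K := (ℝ ∙ β))
  rw [finrank_V, h1] at h2
  omega

lemma finrank_le' (W : Submodule ℝ (V n)) : Module.finrank ℝ W ≤ n := by
  simpa [finrank_V] using Submodule.finrank_le W

lemma eq_top_of_finrank_n {W : Submodule ℝ (V n)} (h : Module.finrank ℝ W = n) : W = ⊤ :=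
  Submodule.eq_top_of_finrank_eq (by rw [h, finrank_V])

lemma sup_eq_top_of_not_le {X H : Submodule ℝ (V n)} (hH : Module.finrank ℝ H + 1 = n)
    (hXH : ¬ X ≤ H) : X ⊔ H = ⊤ := by
  by_contra hne
  have hle : Module.finrank ℝ ↥(X ⊔ H) ≤ Module.finrank ℝ H := by
    have h1 := finrank_le' (X ⊔ H)
    have h2 : Module.finrank ℝ ↥(X ⊔ H) ≠ n := fun hc => hne (eq_top_of_finrank_n hc)
    omega
  have heq := Submodule.eq_of_le_of_finrank_le (le_sup_right (a := X)) hle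
  exact hXH (le_trans le_sup_left heq.ge)

lemma finrank_top' : Module.finrank ℝ (⊤ : Submodule ℝ (V n)) = n := by
  rw [finrank_top]; exact finrank_V n

lemma finrank_inf_of_not_le {X H : Submodule ℝ (V n)} (hH : Module.finrank ℝ H + 1 = n)
    (hXH : ¬ X ≤ H) : Module.finrank ℝ ↥(X ⊓ H) + 1 = Module.finrank ℝ X := by
  have hs := Submodule.finrank_sup_add_finrank_inf_eq X H
  rw [sup_eq_top_of_not_le hH hXH, finrank_top'] at hs
  omega

lemma finrank_inf_hyper {H₁ H₂ : Submodule ℝ (V n)} (h1 : Module.finrank ℝ H₁ + 1 = n)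
    (h2 : Module.finrank ℝ H₂ + 1 = n) (hne : H₁ ≠ H₂) :
    Module.finrank ℝ ↥(H₁ ⊓ H₂) + 2 = n := by
  have hXH : ¬ H₁ ≤ H₂ := fun hle => hne (Submodule.eq_of_le_of_finrank_le hle (by omega))
  have h3 := finrank_inf_of_not_le h2 hXH
  omega

/-- Any `k`-dimensional subspace of Euclidean space is isometric to `V k`. -/
def subIsom {k : ℕ} (W : Submodule ℝ (V n)) (h : Module.finrank ℝ W = k) : W ≃ₗᵢ[ℝ] V k :=
  ((stdOrthonormalBasis ℝ W).reindex (finCongr h)).repr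

def resMap {m : ℕ} (H : Submodule ℝ (V n)) (e : H ≃ₗᵢ[ℝ] V m) (K : Submodule ℝ (V n)) :
    Submodule ℝ (V m) :=
  Submodule.map (e.toLinearEquiv : ↥H →ₗ[ℝ] V m) (Submodule.comap H.subtype K)

lemma mem_resMap {m : ℕ} {H : Submodule ℝ (V n)} {e : H ≃ₗᵢ[ℝ] V m} {K : Submodule ℝ (V n)}
    {x : V m} : x ∈ resMap H e K ↔ ∃ y, ∃ hy : y ∈ H, y ∈ K ∧ e ⟨y, hy⟩ = x := by
  constructor
  · rintro ⟨⟨y, hy⟩, hyK, rfl⟩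
    exact ⟨y, hy, hyK, rfl⟩
  · rintro ⟨y, hy, hyK, rfl⟩
    exact ⟨⟨y, hy⟩, hyK, rfl⟩

lemma resMap_mono {m : ℕ} (H : Submodule ℝ (V n)) (e : H ≃ₗᵢ[ℝ] V m)
    {K K' : Submodule ℝ (V n)} (h : K ≤ K') : resMap H e K ≤ resMap H e K' :=
  Submodule.map_mono (Submodule.comap_mono h)

lemma finrank_resMap {m : ℕ} (H : Submodule ℝ (V n)) (e : H ≃ₗᵢ[ℝ] V m)
    (K : Submodule ℝ (V n)) :
    Module.finrank ℝ ↥(resMap H e K) = Module.finrank ℝ ↥(K ⊓ H) := by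
  rw [resMap, LinearEquiv.finrank_map_eq, ← Submodule.finrank_map_subtype_eq,
    Submodule.map_comap_subtype, inf_comm]

lemma comap_subtype_eq_of_inf_eq {H K K' : Submodule ℝ (V n)} (h : K ⊓ H = K' ⊓ H) :
    Submodule.comap H.subtype K = Submodule.comap H.subtype K' := by
  ext ⟨y, hy⟩
  simp only [Submodule.mem_comap, Submodule.subtype_apply]
  constructor
  · intro hyK
    have hmem : y ∈ K' ⊓ H := h ▸ (Submodule.mem_inf.mpr ⟨hyK, hy⟩)
    exact (Submodule.mem_inf.mp hmem).1
  · intro hyK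
    have hmem : y ∈ K ⊓ H := h.symm ▸ (Submodule.mem_inf.mpr ⟨hyK, hy⟩)
    exact (Submodule.mem_inf.mp hmem).1

lemma resMap_congr_inf {m : ℕ} (H : Submodule ℝ (V n)) (e : H ≃ₗᵢ[ℝ] V m)
    {K K' : Submodule ℝ (V n)} (h : K ⊓ H = K' ⊓ H) : resMap H e K = resMap H e K' := by
  rw [resMap, resMap, comap_subtype_eq_of_inf_eq h]

lemma recover_hyper {X H H₁ : Submodule ℝ (V n)} (hH : Module.finrank ℝ H + 1 = n)
    (hXH : ¬ X ≤ H) (h1 : Module.finrank ℝ H₁ + 1 = n) (hX1 : X ≤ H₁) :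
    (H₁ ⊓ H) ⊔ X = H₁ := by
  have hne : H₁ ≠ H := fun hc => hXH (hc ▸ hX1)
  have hinf2 := finrank_inf_hyper h1 hH hne
  have hXinf := finrank_inf_of_not_le hH hXH
  have hinfX : H₁ ⊓ H ⊓ X = X ⊓ H := by
    rw [inf_right_comm, inf_eq_right.mpr hX1]
  have hs := Submodule.finrank_sup_add_finrank_inf_eq (H₁ ⊓ H) X
  rw [hinfX] at hs
  have hle : (H₁ ⊓ H) ⊔ X ≤ H₁ := sup_le inf_le_left hX1
  exact Submodule.eq_of_le_of_finrank_le hle (by omega)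

lemma hyper_eq_of_inf_eq {X H H₁ H₂ : Submodule ℝ (V n)} (hH : Module.finrank ℝ H + 1 = n)
    (hXH : ¬ X ≤ H) (h1 : Module.finrank ℝ H₁ + 1 = n) (h2 : Module.finrank ℝ H₂ + 1 = n)
    (hX1 : X ≤ H₁) (hX2 : X ≤ H₂) (h : H₁ ⊓ H = H₂ ⊓ H) : H₁ = H₂ := by
  rw [← recover_hyper hH hXH h1 hX1, ← recover_hyper hH hXH h2 hX2, h]

/-- The canonical linear equivalence `K ⊓ H ≃ resMap H e K`. -/
def resIsoL {m : ℕ} (H : Submodule ℝ (V n)) (e : H ≃ₗᵢ[ℝ] V m) (K : Submodule ℝ (V n)) :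
    ↥(K ⊓ H) ≃ₗ[ℝ] ↥(resMap H e K) :=
  LinearEquiv.ofBijective
    (LinearMap.codRestrict (resMap H e K)
      ((e.toLinearEquiv : ↥H →ₗ[ℝ] V m).comp (Submodule.inclusion inf_le_right))
      (fun w => mem_resMap.mpr ⟨w.1, (Submodule.mem_inf.mp w.2).2, (Submodule.mem_inf.mp w.2).1,
        rfl⟩))
    (by
      constructor
      · intro w w' h
        have h1 : (e ⟨w.1, (Submodule.mem_inf.mp w.2).2⟩ : V m)
            = e ⟨w'.1, (Submodule.mem_inf.mp w'.2).2⟩ := congrArg Subtype.val h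
        have h2 := e.injective h1
        have h3 := Subtype.ext_iff.mp h2
        exact Subtype.ext h3
      · intro z
        obtain ⟨y, hy, hyK, hey⟩ := mem_resMap.mp z.2
        exact ⟨⟨y, Submodule.mem_inf.mpr ⟨hyK, hy⟩⟩, Subtype.ext hey⟩)

@[simp] lemma resIsoL_apply_coe {m : ℕ} (H : Submodule ℝ (V n)) (e : H ≃ₗᵢ[ℝ] V m)
    (K : Submodule ℝ (V n)) (w : ↥(K ⊓ H)) :
    (resIsoL H e K w : V m) = e ⟨w.1, (Submodule.mem_inf.mp w.2).2⟩ := rfl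

/-- The canonical linear isometry `K ⊓ H ≃ resMap H e K`. -/
def resIso {m : ℕ} (H : Submodule ℝ (V n)) (e : H ≃ₗᵢ[ℝ] V m) (K : Submodule ℝ (V n)) :
    ↥(K ⊓ H) ≃ₗᵢ[ℝ] ↥(resMap H e K) :=
  (resIsoL H e K).isometryOfInner (by
    intro u v
    rw [Submodule.coe_inner, Submodule.coe_inner, resIsoL_apply_coe, resIsoL_apply_coe,
      e.inner_map_map]
    rfl)

@[simp] lemma resIso_apply_coe {m : ℕ} (H : Submodule ℝ (V n)) (e : H ≃ₗᵢ[ℝ] V m)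
    (K : Submodule ℝ (V n)) (w : ↥(K ⊓ H)) :
    (resIso H e K w : V m) = e ⟨w.1, (Submodule.mem_inf.mp w.2).2⟩ := rfl

lemma erase_image_of_inj {α β : Type*} [DecidableEq α] [DecidableEq β] {f : α → β}
    {s : Finset α} {a : α} (ha : a ∈ s)
    (hinj : ∀ x ∈ s, ∀ y ∈ s, f x = f y → x = y) :
    (s.image f).erase (f a) = (s.erase a).image f := by
  ext b
  simp only [Finset.mem_erase, Finset.mem_image]
  constructor
  · rintro ⟨hne, x, hx, rfl⟩
    exact ⟨x, ⟨fun hxa => hne (by rw [hxa]), hx⟩, rfl⟩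
  · rintro ⟨x, ⟨hxa, hx⟩, rfl⟩
    exact ⟨fun hfa => hxa (hinj x hx a ha hfa), x, hx, rfl⟩

variable {p k : ℕ}

/-- The isometry between the two iterated restrictions. -/
def eP (H H₀ : Submodule ℝ (V n)) (e : H ≃ₗᵢ[ℝ] V p) (e₀ : H₀ ≃ₗᵢ[ℝ] V p)
    (estar : ↥(resMap H₀ e₀ H) ≃ₗᵢ[ℝ] V k) : ↥(resMap H e H₀) ≃ₗᵢ[ℝ] V k :=
  (resIso H e H₀).symm.trans ((LinearIsometryEquiv.ofEq _ _ (inf_comm H₀ H)).trans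
    ((resIso H₀ e₀ H).trans estar))

lemma eP_apply (H H₀ : Submodule ℝ (V n)) (e : H ≃ₗᵢ[ℝ] V p) (e₀ : H₀ ≃ₗᵢ[ℝ] V p)
    (estar : ↥(resMap H₀ e₀ H) ≃ₗᵢ[ℝ] V k) {y : V n} (hyH : y ∈ H) (hyH₀ : y ∈ H₀)
    (hz : (e ⟨y, hyH⟩ : V p) ∈ resMap H e H₀) (hw : (e₀ ⟨y, hyH₀⟩ : V p) ∈ resMap H₀ e₀ H) :
    eP H H₀ e e₀ estar ⟨e ⟨y, hyH⟩, hz⟩ = estar ⟨e₀ ⟨y, hyH₀⟩, hw⟩ := by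
  have h1 : (resIso H e H₀).symm ⟨e ⟨y, hyH⟩, hz⟩
      = ⟨y, Submodule.mem_inf.mpr ⟨hyH₀, hyH⟩⟩ := by
    have h0 : resIso H e H₀ ⟨y, Submodule.mem_inf.mpr ⟨hyH₀, hyH⟩⟩ = ⟨e ⟨y, hyH⟩, hz⟩ :=
      Subtype.ext rfl
    rw [← h0, LinearIsometryEquiv.symm_apply_apply]
  simp only [eP, LinearIsometryEquiv.trans_apply, h1]
  exact congrArg estar (Subtype.ext rfl)

lemma resMap_resMap (H H₀ H' : Submodule ℝ (V n)) (e : H ≃ₗᵢ[ℝ] V p) (e₀ : H₀ ≃ₗᵢ[ℝ] V p)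
    (estar : ↥(resMap H₀ e₀ H) ≃ₗᵢ[ℝ] V k) :
    resMap (resMap H e H₀) (eP H H₀ e e₀ estar) (resMap H e H')
      = resMap (resMap H₀ e₀ H) estar (resMap H₀ e₀ H') := by
  ext x
  rw [mem_resMap, mem_resMap]
  constructor
  · rintro ⟨z, hz, hz', rfl⟩
    obtain ⟨y, hyH, hyH₀, hey⟩ := mem_resMap.mp hz
    subst hey
    obtain ⟨y₂, hy₂H, hy₂H', hey₂⟩ := mem_resMap.mp hz'
    have hyy : y₂ = y := Subtype.ext_iff.mp (e.injective hey₂)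
    subst hyy
    refine ⟨(e₀ ⟨y₂, hyH₀⟩ : V p), mem_resMap.mpr ⟨y₂, hyH₀, hyH, rfl⟩,
      mem_resMap.mpr ⟨y₂, hyH₀, hy₂H', rfl⟩, ?_⟩
    exact (eP_apply H H₀ e e₀ estar hyH hyH₀ hz _).symm
  · rintro ⟨w, hw, hw', rfl⟩
    obtain ⟨y, hyH₀, hyH, hey⟩ := mem_resMap.mp hw
    subst hey
    obtain ⟨y₂, hy₂H₀, hy₂H', hey₂⟩ := mem_resMap.mp hw'
    have hyy : y₂ = y := Subtype.ext_iff.mp (e₀.injective hey₂)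
    subst hyy
    refine ⟨(e ⟨y₂, hyH⟩ : V p), mem_resMap.mpr ⟨y₂, hyH, hyH₀, rfl⟩,
      mem_resMap.mpr ⟨y₂, hyH, hy₂H', rfl⟩, ?_⟩
    exact eP_apply H H₀ e e₀ estar hyH hyH₀ _ hw

lemma resFree {N : ℕ} {Ar : Arr N} {Dm : Multiset ℕ} (h : IndFree N Ar Dm) :
    ∀ (p : ℕ), N = p + 1 → ∀ D : Multiset ℕ, Dm = 0 ::ₘ D →
      ∀ X H : Submodule ℝ (V N), (∀ H' ∈ Ar, X ≤ H' ∧ Module.finrank ℝ H' + 1 = N) →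
        Module.finrank ℝ H + 1 = N → ¬ X ≤ H → ∀ e : H ≃ₗᵢ[ℝ] V p,
          IndFree p (Ar.image (resMap H e)) D := by
  induction h with
  | empty M =>
    intro p hp D hD X H hA hH hXH e
    subst hp
    rw [Multiset.replicate_succ] at hD
    have hD' : Multiset.replicate p 0 = D := (Multiset.cons_inj_right 0).mp hD
    rw [Finset.image_empty, ← hD']
    exact IndFree.empty p
  | step nn Br H₀ hH₀ D₀ d hd e₀ hdel hres IHdel IHres =>
    intro p hp D hD X H hA hH hXH e
    have hpq : p = nn := by omega
    subst hpq
    rcases Multiset.cons_eq_cons.mp hD with ⟨h1, -⟩ | ⟨-, cs, hD₀, hDcs⟩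
    · omega
    obtain ⟨hXH₀, hfH₀⟩ := hA H₀ hH₀
    have hXne : Module.finrank ℝ X ≠ 0 := by
      intro h0
      exact hXH ((Submodule.finrank_eq_zero.mp h0) ▸ bot_le)
    have hXle : Module.finrank ℝ X ≤ Module.finrank ℝ H₀ := Submodule.finrank_mono hXH₀
    obtain ⟨k, hk⟩ : ∃ k, p = k + 1 := ⟨p - 1, by omega⟩
    subst hk
    have hHne₀ : H ≠ H₀ := fun hc => hXH (by rw [hc]; exact hXH₀)
    have hinj : ∀ H₁ ∈ Br, ∀ H₂ ∈ Br, resMap H e H₁ = resMap H e H₂ → H₁ = H₂ := by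
      intro H₁ h₁ H₂ h₂ hres12
      have hc : Submodule.comap H.subtype H₁ = Submodule.comap H.subtype H₂ :=
        Submodule.map_injective_of_injective (f := (e.toLinearEquiv : ↥H →ₗ[ℝ] V (k + 1)))
          e.injective hres12
      have hinf : H₁ ⊓ H = H₂ ⊓ H := by
        have h3 := congrArg (Submodule.map H.subtype) hc
        rwa [Submodule.map_comap_subtype, Submodule.map_comap_subtype, inf_comm H H₁,
          inf_comm H H₂] at h3
      exact hyper_eq_of_inf_eq hH hXH (hA H₁ h₁).2 (hA H₂ h₂).2 (hA H₁ h₁).1 (hA H₂ h₂).1 hinf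
    have herase : (Br.image (resMap H e)).erase (resMap H e H₀)
        = (Br.erase H₀).image (resMap H e) := erase_image_of_inj hH₀ hinj
    have hHfin : Module.finrank ℝ ↥(resMap H₀ e₀ H) = k := by
      have h4 := finrank_resMap H₀ e₀ H
      have h5 := finrank_inf_hyper hH hfH₀ hHne₀
      omega
    rw [hDcs]
    refine IndFree.step k (Br.image (resMap H e)) (resMap H e H₀)
      (Finset.mem_image_of_mem _ hH₀) cs d hd
      (eP H H₀ e e₀ (subIsom (resMap H₀ e₀ H) hHfin)) ?_ ?_
    · -- deletion
      rw [herase]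
      exact IHdel (k + 1) rfl ((d - 1) ::ₘ cs) (by rw [hD₀]; exact Multiset.cons_swap _ _ _)
        X H (fun H' hH' => hA H' (Finset.mem_of_mem_erase hH')) hH hXH e
    · -- restriction
      have hresIH : IndFree k (((Br.erase H₀).image (resMap H₀ e₀)).image
          (resMap (resMap H₀ e₀ H) (subIsom (resMap H₀ e₀ H) hHfin))) cs := by
        refine IHres k rfl cs hD₀ (resMap H₀ e₀ X) (resMap H₀ e₀ H) ?_ ?_ ?_
          (subIsom (resMap H₀ e₀ H) hHfin)
        · intro K hK
          obtain ⟨H', hH', rfl⟩ := Finset.mem_image.mp hK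
          have hH'A := hA H' (Finset.mem_of_mem_erase hH')
          have hne : H' ≠ H₀ := (Finset.mem_erase.mp hH').1
          show resMap H₀ e₀ X ≤ resMap H₀ e₀ H'
            ∧ Module.finrank ℝ ↥(resMap H₀ e₀ H') + 1 = k + 1
          constructor
          · exact resMap_mono H₀ e₀ hH'A.1
          · have h6 := finrank_resMap H₀ e₀ H'
            have h7 := finrank_inf_hyper hH'A.2 hfH₀ hne
            omega
        · omega
        · intro hle
          apply hXH
          intro x hx
          have hxH₀ : x ∈ H₀ := hXH₀ hx
          have hmem : (e₀ ⟨x, hxH₀⟩ : V (k + 1)) ∈ resMap H₀ e₀ X :=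
            mem_resMap.mpr ⟨x, hxH₀, hx, rfl⟩
          obtain ⟨y, hyH₀, hyH, hey⟩ := mem_resMap.mp (hle hmem)
          have hyx : y = x := Subtype.ext_iff.mp (e₀.injective hey)
          exact hyx ▸ hyH
      have himg : ((Br.erase H₀).image (resMap H e)).image
            (resMap (resMap H e H₀) (eP H H₀ e e₀ (subIsom (resMap H₀ e₀ H) hHfin)))
          = ((Br.erase H₀).image (resMap H₀ e₀)).image
            (resMap (resMap H₀ e₀ H) (subIsom (resMap H₀ e₀ H) hHfin)) := by
        rw [Finset.image_image, Finset.image_image]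
        apply Finset.image_congr
        intro H' _
        exact resMap_resMap H H₀ H' e e₀ (subIsom (resMap H₀ e₀ H) hHfin)
      show IndFree k (((Br.image (resMap H e)).erase (resMap H e H₀)).image
        (resMap (resMap H e H₀) (eP H H₀ e e₀ (subIsom (resMap H₀ e₀ H) hHfin)))) cs
      rw [herase, himg]
      exact hresIH

lemma exists_loc_of_inf {n : ℕ} (A : Arr n) (hA : ∀ H ∈ A, IsHyperplane H)
    (X : Submodule ℝ (V n)) (hmod : IsModularFlat A X) (hcoatom : flatRk X = arrRank A - 1)
    {H Hj : Submodule ℝ (V n)} (hH : H ∈ A) (hHj : Hj ∈ A) (hne : Hj ≠ H)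
    (hXH : ¬ X ≤ H) : ∃ H' ∈ locAt A X, Hj ⊓ H = H' ⊓ H := by
  have hhH := (hA H hH).finrank_succ
  have hhj := (hA Hj hHj).finrank_succ
  have hcX : A.inf id ≤ X := by
    obtain ⟨S, hS, hXeq⟩ := hmod.1
    rw [hXeq]
    exact Finset.inf_mono hS
  have hcH : A.inf id ≤ H := by
    have := Finset.inf_le (f := id) hH
    simpa using this
  have hcHj : A.inf id ≤ Hj := by
    have := Finset.inf_le (f := id) hHj
    simpa using this
  have hgle : Module.finrank ℝ ↥(A.inf id) ≤ Module.finrank ℝ H := Submodule.finrank_mono hcH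
  have hXlen := finrank_le' X
  simp only [flatRk, arrRank] at hcoatom
  have ha : Module.finrank ℝ X = Module.finrank ℝ ↥(A.inf id) + 1 := by omega
  have hYflat : Hj ⊓ H ∈ flats A := by
    refine ⟨{Hj, H}, ?_, ?_⟩
    · intro x hx
      rcases Finset.mem_insert.mp hx with rfl | hx
      · exact hHj
      · rw [Finset.mem_singleton.mp hx]; exact hH
    · simp [Finset.inf_insert, Finset.inf_singleton]
  have hmodEq := hmod.2 _ hYflat
  have hfY : Module.finrank ℝ ↥(Hj ⊓ H) + 2 = n := finrank_inf_hyper hhj hhH hne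
  have hfXH : Module.finrank ℝ ↥(X ⊓ H) + 1 = Module.finrank ℝ X :=
    finrank_inf_of_not_le hhH hXH
  have hle1 : X ⊓ (Hj ⊓ H) ≤ X ⊓ H := by
    intro x hx
    simp only [Submodule.mem_inf] at hx ⊢
    tauto
  have hle2 : A.inf id ≤ X ⊓ (Hj ⊓ H) := le_inf hcX (le_inf hcHj hcH)
  have hf1 : Module.finrank ℝ ↥(X ⊓ (Hj ⊓ H)) = Module.finrank ℝ ↥(A.inf id) := by
    have u1 := Submodule.finrank_mono hle1
    have u2 := Submodule.finrank_mono hle2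
    omega
  simp only [flatRk] at hmodEq
  have hJle := finrank_le' (closJoin A X (Hj ⊓ H))
  have hfJ : Module.finrank ℝ ↥(closJoin A X (Hj ⊓ H)) + 1 = n := by omega
  have hne' : (A.filter fun H' => X ≤ H' ∧ Hj ⊓ H ≤ H').Nonempty := by
    by_contra hcon
    rw [Finset.not_nonempty_iff_eq_empty] at hcon
    unfold closJoin at hfJ
    rw [hcon, Finset.inf_empty] at hfJ
    rw [finrank_top'] at hfJ
    omega
  obtain ⟨H', hH'⟩ := hne'
  have hmem := Finset.mem_filter.mp hH'
  obtain ⟨hH'A, hXH', hYH'⟩ : H' ∈ A ∧ X ≤ H' ∧ Hj ⊓ H ≤ H' :=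
    ⟨hmem.1, hmem.2.1, hmem.2.2⟩
  refine ⟨H', Finset.mem_filter.mpr ⟨hH'A, hXH'⟩, ?_⟩
  have hneH' : H' ≠ H := fun hc => hXH (by rw [← hc]; exact hXH')
  have hf2 : Module.finrank ℝ ↥(H' ⊓ H) + 2 = n :=
    finrank_inf_hyper (hA H' hH'A).finrank_succ hhH hneH'
  exact Submodule.eq_of_le_of_finrank_le (le_inf hYH' inf_le_right) (by omega)

lemma mainStep {n : ℕ} (A : Arr n) (hA : ∀ H ∈ A, IsHyperplane H)
    (X : Submodule ℝ (V n)) (hmod : IsModularFlat A X)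
    (hcoatom : flatRk X = arrRank A - 1)
    (D : Multiset ℕ) (hloc : IndFree n (locAt A X) (0 ::ₘ D)) :
    ∀ (j : ℕ) (B : Arr n), B ⊆ A → locAt A X ⊆ B → B.card = (locAt A X).card + j →
      IndFree n B (j ::ₘ D) := by
  intro j
  induction j with
  | zero =>
    intro B hBA hAB hcard
    have hBeq : locAt A X = B := Finset.eq_of_subset_of_card_le hAB (by omega)
    rw [← hBeq]
    exact hloc
  | succ j IH =>
    intro B hBA hAB hcard
    obtain ⟨H, hHB, hHA₀⟩ : ∃ H ∈ B, H ∉ locAt A X := by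
      by_contra hc
      push_neg at hc
      have := Finset.card_le_card hc
      omega
    have hHA : H ∈ A := hBA hHB
    have hhyp := (hA H hHA).finrank_succ
    have hXH : ¬ X ≤ H := fun hle => hHA₀ (Finset.mem_filter.mpr ⟨hHA, hle⟩)
    obtain ⟨k, hk⟩ : ∃ k, n = k + 1 := ⟨n - 1, by omega⟩
    subst hk
    have he : Module.finrank ℝ H = k := by omega
    refine IndFree.step k B H hHB D (j + 1) (by omega) (subIsom H he) ?_ ?_
    · have hdel := IH (B.erase H) (fun x hx => hBA (Finset.mem_of_mem_erase hx))
        (fun x hx => Finset.mem_erase.mpr ⟨fun hc => hHA₀ (hc ▸ hx), hAB hx⟩)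
        (by rw [Finset.card_erase_of_mem hHB]; omega)
      exact hdel
    · have himg : (B.erase H).image (resMap H (subIsom H he))
          = (locAt A X).image (resMap H (subIsom H he)) := by
        apply Finset.Subset.antisymm
        · intro K hK
          obtain ⟨Hj, hHj, rfl⟩ := Finset.mem_image.mp hK
          have hHjA : Hj ∈ A := hBA (Finset.mem_of_mem_erase hHj)
          have hHjne : Hj ≠ H := (Finset.mem_erase.mp hHj).1
          by_cases hcase : Hj ∈ locAt A X
          · exact Finset.mem_image_of_mem _ hcase
          · obtain ⟨H', hH', hinf⟩ := exists_loc_of_inf A hA X hmod hcoatom hHA hHjA hHjne hXH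
            rw [resMap_congr_inf H (subIsom H he) hinf]
            exact Finset.mem_image_of_mem _ hH'
        · exact Finset.image_subset_image (fun x hx =>
            Finset.mem_erase.mpr ⟨fun hc => hHA₀ (hc ▸ hx), hAB hx⟩)
      have hT := resFree hloc k rfl D rfl X H
        (fun H' hH' => ⟨(Finset.mem_filter.mp hH').2, (hA H' (Finset.mem_filter.mp hH').1).finrank_succ⟩)
        hhyp hXH (subIsom H he)
      show IndFree k ((B.erase H).image (resMap H (subIsom H he))) D
      rw [himg]
      exact hT

theorem statement_10 {n : ℕ} (A : Arr n) (hA : ∀ H ∈ A, IsHyperplane H)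
    (X : Submodule ℝ (V n)) (hmod : IsModularFlat A X)
    (hcoatom : flatRk X = arrRank A - 1)
    (D : Multiset ℕ) (hloc : IndFree n (locAt A X) (0 ::ₘ D)) :
    IndFree n A ((A.card - (locAt A X).card) ::ₘ D) := by
  have hsub : locAt A X ⊆ A := Finset.filter_subset _ _
  have hcard := Finset.card_le_card hsub
  exact mainStep A hA X hmod hcoatom D hloc (A.card - (locAt A X).card) A
    Finset.Subset.rfl hsub (by omega)

end Paper
end
end

section
/- Let W be a finite Coxeter group and w ∈ W. Fix a convex order on the inversion set I(w) coming from a reduced expression s_1⋯s_{ℓ(w)} of w, i.e. β_i = s_1⋯s_{i-1}α_{s_i} with β_1 < ⋯ < β_{ℓ(w)}. Define φ : 2^{I(w)} → [e,w] by sending {β_{j_1} < ⋯ < β_{j_k}} to t_{β_{j_1}}⋯t_{β_{j_k}}w. Then the restriction of φ to the collection of nbc-sets of I(w) (with respect to the chosen order) is injective. -/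
noncomputable section
open scoped RealInnerProductSpace Classical

namespace Paper

variable {n : ℕ}

/-! ### Auxiliary lemmas for statement_11 -/

lemma sref_apply' (γ x : V n) :
    sref n γ x = x - ((2 * (inner ℝ γ x : ℝ)) / (inner ℝ γ γ : ℝ)) • γ := by
  have h1 : sref n γ x = -((ℝ ∙ γ).reflection x) :=
    Submodule.reflection_orthogonal_apply (K := ℝ ∙ γ) x
  rw [h1, Submodule.reflection_apply, Submodule.starProjection_singleton]
  have h2 : (inner ℝ γ γ : ℝ) = ‖γ‖^2 := real_inner_self_eq_norm_sq γ
  rw [h2, two_smul, neg_sub, sub_add_eq_sub_sub, sub_sub, ← add_smul]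
  congr 1
  simp only [RCLike.ofReal_real_eq_id, id_eq]
  ring

lemma sref_apply_of_inner_zero' {γ x : V n} (h : (inner ℝ γ x : ℝ) = 0) :
    sref n γ x = x := by
  rw [sref_apply', h]; simp

lemma mem_orthogonal_span_iff {X : Set (V n)} {v : V n} :
    v ∈ (Submodule.span ℝ X)ᗮ ↔ ∀ x ∈ X, (inner ℝ x v : ℝ) = 0 := by
  rw [Submodule.mem_orthogonal]
  constructor
  · intro h x hx; exact h x (Submodule.subset_span hx)
  · intro h u hu
    induction hu using Submodule.span_induction with
    | mem y hy => exact h y hy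
    | zero => exact inner_zero_left v
    | add y z _ _ hy hz => rw [inner_add_left, hy, hz]; ring
    | smul a y _ hy => rw [real_inner_smul_left, hy]; ring

lemma sort_append_max {l : ℕ} {S : Finset (Fin l)} {m : Fin l} (hm : m ∈ S)
    (hmax : ∀ j ∈ S, j ≤ m) :
    S.sort (· ≤ ·) = (S.erase m).sort (· ≤ ·) ++ [m] := by
  apply List.Perm.eq_of_pairwise' (r := (· ≤ ·)) (Finset.pairwise_sort _ _) ?_ ?_
  · refine List.pairwise_append.mpr ⟨Finset.pairwise_sort _ _, List.pairwise_singleton _ m, ?_⟩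
    intro x hx y hy
    rw [List.mem_singleton] at hy
    subst hy
    exact hmax x (Finset.mem_of_mem_erase ((Finset.mem_sort _).mp hx))
  · have p1 : (S.sort (· ≤ ·)).Perm S.toList := Finset.sort_perm_toList _ _
    have p2 : S.toList.Perm (m :: (S.erase m).toList) := by
      conv_lhs => rw [← Finset.insert_erase hm]
      exact Finset.toList_insert (Finset.notMem_erase m S)
    have p3 : (m :: (S.erase m).toList).Perm (m :: (S.erase m).sort (· ≤ ·)) :=
      List.Perm.cons m (Finset.sort_perm_toList _ _).symm
    have p4 : ((S.erase m).sort (· ≤ ·) ++ [m]).Perm (m :: (S.erase m).sort (· ≤ ·)) :=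
      List.perm_append_singleton _ _
    exact ((p1.trans p2).trans p3).trans p4.symm

section Abstract

variable {l : ℕ} (β : Fin l → V n)

/-- product of reflections along a list of indices -/
def pr (L : List (Fin l)) : O n := (L.map fun i => sref n (β i)).prod

lemma pr_nil : pr β [] = 1 := rfl

lemma pr_cons (a : Fin l) (L : List (Fin l)) :
    pr β (a :: L) = sref n (β a) * pr β L := by
  simp [pr]

lemma pr_append (L₁ L₂ : List (Fin l)) :
    pr β (L₁ ++ L₂) = pr β L₁ * pr β L₂ := by
  simp [pr]

lemma pr_cons_apply (a : Fin l) (L : List (Fin l)) (v : V n) :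
    pr β (a :: L) v = sref n (β a) (pr β L v) := by
  rw [pr_cons]; rfl

/-- telescoping: pr L v - v lies in the span of the β's of L -/
lemma pr_sub_mem_span (L : List (Fin l)) (v : V n) :
    pr β L v - v ∈ Submodule.span ℝ (β '' {i | i ∈ L}) := by
  induction L with
  | nil => simp [pr_nil]
  | cons a L ih =>
    rw [pr_cons_apply, sref_apply']
    have hsub : Submodule.span ℝ (β '' {i | i ∈ L}) ≤
        Submodule.span ℝ (β '' {i | i ∈ a :: L}) := by
      apply Submodule.span_mono
      apply Set.image_mono
      intro x hx; exact List.mem_cons_of_mem _ hx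
    have h1 : pr β L v - v ∈ Submodule.span ℝ (β '' {i | i ∈ a :: L}) := hsub ih
    have h2 : β a ∈ Submodule.span ℝ (β '' {i | i ∈ a :: L}) :=
      Submodule.subset_span ⟨a, List.mem_cons_self, rfl⟩
    have := Submodule.sub_mem _ h1 (Submodule.smul_mem _
      ((2 * (inner ℝ (β a) (pr β L v) : ℝ)) / (inner ℝ (β a) (β a) : ℝ)) h2)
    convert this using 1
    abel

lemma pr_fixed_of_inner_zero (L : List (Fin l)) (v : V n)
    (h : ∀ i ∈ L, (inner ℝ (β i) v : ℝ) = 0) : pr β L v = v := by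
  induction L with
  | nil => simp [pr_nil]
  | cons a L ih =>
    rw [pr_cons_apply, ih (fun i hi => h i (List.mem_cons_of_mem _ hi))]
    exact sref_apply_of_inner_zero' (h a (List.mem_cons_self))

/-- step-wise independence of a list -/
inductive StepIndep : List (Fin l) → Prop
  | nil : StepIndep []
  | cons {a : Fin l} {L : List (Fin l)}
      (h : β a ∉ Submodule.span ℝ (β '' {i | i ∈ L}))
      (hL : StepIndep L) : StepIndep (a :: L)

lemma stepIndep_inner_zero {L : List (Fin l)} (hL : StepIndep β L) (v : V n)
    (hv : pr β L v = v) : ∀ i ∈ L, (inner ℝ (β i) v : ℝ) = 0 := by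
  induction hL with
  | nil => intro i hi; simp at hi
  | @cons a L ha hL ih =>
    have hne : β a ≠ 0 := fun h0 => ha (h0 ▸ Submodule.zero_mem _)
    rw [pr_cons_apply, sref_apply'] at hv
    set u := pr β L v with hu
    set c : ℝ := (2 * (inner ℝ (β a) u : ℝ)) / (inner ℝ (β a) (β a) : ℝ) with hc
    have hmem : u - v ∈ Submodule.span ℝ (β '' {i | i ∈ L}) := pr_sub_mem_span β L v
    have huv : u - v = c • β a := by
      have : u - c • β a = v := hv
      rw [← this]; abel
    have hczero : c = 0 := by
      by_contra hcne
      apply ha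
      have : β a = c⁻¹ • (u - v) := by rw [huv, smul_smul, inv_mul_cancel₀ hcne, one_smul]
      rw [this]
      exact Submodule.smul_mem _ _ hmem
    have huveq : u = v := by
      have := huv; rw [hczero, zero_smul, sub_eq_zero] at this; exact this
    have hinner : (inner ℝ (β a) v : ℝ) = 0 := by
      have hself : (inner ℝ (β a) (β a) : ℝ) ≠ 0 :=
        inner_self_ne_zero.mpr hne
      rcases div_eq_zero_iff.mp hczero with h2 | h2
      · rw [huveq] at h2; linarith
      · exact absurd h2 hself
    intro i hi
    rcases List.mem_cons.mp hi with rfl | hi'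
    · exact hinner
    · exact ih huveq i hi'

/-- mirror of `RS.wordDep` -/
def DepA (T : Finset (Fin l)) : Prop :=
  ¬ LinearIndependent ℝ (fun i : {x // x ∈ T} => β i.1)

/-- mirror of `RS.wordMinDep` -/
def MinDepA (T : Finset (Fin l)) : Prop :=
  DepA β T ∧ ∀ T' : Finset (Fin l), T' ⊂ T → ¬ DepA β T'

/-- mirror of `RS.wordBC` -/
def BCA (B : Finset (Fin l)) : Prop :=
  ∃ m : Fin l, (∀ j ∈ B, j < m) ∧ MinDepA β (insert m B)

/-- mirror of `RS.wordNBC` -/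
def NBCA (S : Finset (Fin l)) : Prop :=
  ∀ B ⊆ S, ¬ BCA β B

lemma depA_iff (T : Finset (Fin l)) :
    DepA β T ↔ ∃ c : Fin l → ℝ,
      (∑ j ∈ T, c j • β j = 0) ∧ ∃ j ∈ T, c j ≠ 0 := by
  rw [DepA, Fintype.not_linearIndependent_iff]
  constructor
  · rintro ⟨g, hsum, ⟨i, hi⟩⟩
    refine ⟨fun j => if h : j ∈ T then g ⟨j, h⟩ else 0, ?_, ⟨i.1, i.2, by simp [i.2, hi]⟩⟩
    rw [← Finset.sum_attach T (fun j => (if h : j ∈ T then g ⟨j, h⟩ else 0) • β j)]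
    rw [← hsum]
    apply Finset.sum_congr rfl
    intro x _
    simp [x.2]
  · rintro ⟨c, hsum, ⟨j, hj, hjne⟩⟩
    refine ⟨fun i => c i.1, ?_, ⟨⟨j, hj⟩, hjne⟩⟩
    rw [← hsum, ← Finset.sum_attach T (fun j => c j • β j)]
    rfl

lemma indepA_mono {T T' : Finset (Fin l)} (hsub : T' ⊆ T) (h : ¬ DepA β T) :
    ¬ DepA β T' := by
  rw [DepA, not_not] at *
  exact h.comp (f := fun i : {x // x ∈ T'} => (⟨i.1, hsub i.2⟩ : {x // x ∈ T}))
    (fun a b hab => Subtype.ext (by simpa using congrArg Subtype.val hab))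

lemma mem_span_image_finset_iff {x : V n} {C : Finset (Fin l)} :
    x ∈ Submodule.span ℝ (β '' ↑C) ↔ ∃ c : Fin l → ℝ, ∑ j ∈ C, c j • β j = x := by
  constructor
  · intro hx
    induction hx using Submodule.span_induction with
    | mem y hy =>
      rcases hy with ⟨j, hj, rfl⟩
      refine ⟨fun i => if i = j then 1 else 0, ?_⟩
      have : ∀ i ∈ C, (if i = j then (1:ℝ) else 0) • β i
          = if i = j then β j else 0 := by
        intro i _; split <;> simp_all
      rw [Finset.sum_congr rfl this, Finset.sum_ite_eq' C j (fun _ => β j)]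
      simp only [Finset.mem_coe] at hj
      simp [hj]
    | zero => exact ⟨0, by simp⟩
    | add y z _ _ hy hz =>
      rcases hy with ⟨c₁, h₁⟩; rcases hz with ⟨c₂, h₂⟩
      exact ⟨c₁ + c₂, by simp [add_smul, Finset.sum_add_distrib, h₁, h₂]⟩
    | smul a y _ hy =>
      rcases hy with ⟨c, h⟩
      exact ⟨a • c, by
        rw [← h, Finset.smul_sum]
        exact Finset.sum_congr rfl fun i _ => by simp [smul_smul]⟩
  · rintro ⟨c, rfl⟩
    apply Submodule.sum_mem
    intro j hj
    exact Submodule.smul_mem _ _ (Submodule.subset_span ⟨j, hj, rfl⟩)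

lemma not_mem_span_of_indepA {S : Finset (Fin l)} (hS : ¬ DepA β S)
    {a : Fin l} (ha : a ∈ S) {D : Set (Fin l)} (hD : D ⊆ ↑S) (haD : a ∉ D) :
    β a ∉ Submodule.span ℝ (β '' D) := by
  rw [DepA, not_not] at hS
  have h := hS.notMem_span_image (s := {i : {x // x ∈ S} | i.1 ∈ D})
    (x := ⟨a, ha⟩) (by simpa using haD)
  convert h using 3
  ext y
  constructor
  · rintro ⟨j, hj, rfl⟩
    exact ⟨⟨j, hD hj⟩, hj, rfl⟩
  · rintro ⟨j, hj, rfl⟩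
    exact ⟨j.1, hj, rfl⟩

lemma nbcA_mono {S' S : Finset (Fin l)} (h : S' ⊆ S) (hS : NBCA β S) : NBCA β S' :=
  fun B hB => hS B (hB.trans h)

lemma nbcA_indep {S : Finset (Fin l)} (hS : NBCA β S) : ¬ DepA β S := by
  intro hdep
  obtain ⟨C, hCmem, hCmin⟩ := Finset.exists_min_image
    ((S.powerset).filter (fun C => DepA β C)) Finset.card
    ⟨S, by simp [Finset.mem_filter, hdep]⟩
  rw [Finset.mem_filter, Finset.mem_powerset] at hCmem
  obtain ⟨hCS, hCdep⟩ := hCmem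
  have hCne : C.Nonempty := by
    rcases Finset.eq_empty_or_nonempty C with rfl | h
    · rw [depA_iff] at hCdep
      obtain ⟨c, _, j, hj, _⟩ := hCdep
      simp at hj
    · exact h
  set m := C.max' hCne with hm
  apply hS (C.erase m) ((Finset.erase_subset _ _).trans hCS)
  refine ⟨m, ?_, ?_⟩
  · intro j hj
    exact lt_of_le_of_ne (C.le_max' j (Finset.mem_of_mem_erase hj))
      (Finset.ne_of_mem_erase hj)
  · rw [Finset.insert_erase (C.max'_mem hCne)]
    refine ⟨hCdep, fun T' hT'sub hT'dep => ?_⟩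
    have hle := hCmin T' (by
      rw [Finset.mem_filter, Finset.mem_powerset]
      exact ⟨hT'sub.subset.trans hCS, hT'dep⟩)
    have := Finset.card_lt_card hT'sub
    omega

lemma stepIndep_of_indepA {S : Finset (Fin l)} (hS : ¬ DepA β S) :
    ∀ L : List (Fin l), L.Nodup → (∀ i ∈ L, i ∈ S) → StepIndep β L := by
  intro L
  induction L with
  | nil => intro _ _; exact StepIndep.nil
  | cons a L ih =>
    intro hnd hmem
    rw [List.nodup_cons] at hnd
    refine StepIndep.cons ?_ (ih hnd.2 (fun i hi => hmem i (List.mem_cons_of_mem _ hi)))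
    exact not_mem_span_of_indepA β hS (hmem a (List.mem_cons_self))
      (fun i hi => hmem i (List.mem_cons_of_mem _ hi)) hnd.1

lemma fixA_iff {S : Finset (Fin l)} (hS : ¬ DepA β S) (v : V n) :
    pr β (S.sort (· ≤ ·)) v = v ↔ v ∈ (Submodule.span ℝ (β '' ↑S))ᗮ := by
  rw [mem_orthogonal_span_iff]
  constructor
  · intro h x hx
    rcases hx with ⟨i, hi, rfl⟩
    exact stepIndep_inner_zero β
      (stepIndep_of_indepA β hS _ (Finset.sort_nodup _ _)
        (fun i hi => (Finset.mem_sort _).mp hi)) v h i ((Finset.mem_sort _).mpr hi)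
  · intro h
    exact pr_fixed_of_inner_zero β _ v
      (fun i hi => h (β i) ⟨i, (Finset.mem_sort _).mp hi, rfl⟩)

lemma spanA_eq {S T : Finset (Fin l)} (hS : ¬ DepA β S) (hT : ¬ DepA β T)
    (h : pr β (S.sort (· ≤ ·)) = pr β (T.sort (· ≤ ·))) :
    Submodule.span ℝ (β '' ↑S) = Submodule.span ℝ (β '' ↑T) := by
  have horth : (Submodule.span ℝ (β '' ↑S))ᗮ = (Submodule.span ℝ (β '' ↑T))ᗮ := by
    ext v
    rw [← fixA_iff β hS, ← fixA_iff β hT, h]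
  calc Submodule.span ℝ (β '' ↑S) = ((Submodule.span ℝ (β '' ↑S))ᗮ)ᗮ :=
        (Submodule.orthogonal_orthogonal _).symm
    _ = ((Submodule.span ℝ (β '' ↑T))ᗮ)ᗮ := by rw [horth]
    _ = Submodule.span ℝ (β '' ↑T) := Submodule.orthogonal_orthogonal _

lemma bc_from_span {T : Finset (Fin l)} {m0 : Fin l} (hT : NBCA β T)
    (hj : ∀ j ∈ T, j < m0) (hmem : β m0 ∈ Submodule.span ℝ (β '' ↑T)) : False := by
  obtain ⟨C, hCmem, hCmin⟩ := Finset.exists_min_image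
    ((T.powerset).filter (fun C : Finset (Fin l) => β m0 ∈ Submodule.span ℝ (β '' (C : Set (Fin l))))) Finset.card
    ⟨T, by rw [Finset.mem_filter, Finset.mem_powerset]; exact ⟨Finset.Subset.refl T, hmem⟩⟩
  rw [Finset.mem_filter, Finset.mem_powerset] at hCmem
  obtain ⟨hCT, hCspan⟩ := hCmem
  have hTindep : ¬ DepA β T := nbcA_indep β hT
  have hm0T : m0 ∉ T := fun h => lt_irrefl m0 (hj m0 h)
  have hm0C : m0 ∉ C := fun h => hm0T (hCT h)
  apply hT C hCT
  refine ⟨m0, fun j hjC => hj j (hCT hjC), ?_, ?_⟩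
  · -- DepA (insert m0 C)
    rw [depA_iff]
    obtain ⟨c, hc⟩ := (mem_span_image_finset_iff β).mp hCspan
    refine ⟨fun j => if j = m0 then -1 else c j, ?_, ⟨m0, Finset.mem_insert_self _ _, by simp⟩⟩
    rw [Finset.sum_insert hm0C]
    have : ∀ j ∈ C, (if j = m0 then (-1:ℝ) else c j) • β j = c j • β j := by
      intro j hjC
      have : j ≠ m0 := fun h => hm0C (h ▸ hjC)
      simp [this]
    rw [Finset.sum_congr rfl this, hc]
    simp
  · -- minimality
    intro T' hT'sub hT'dep
    by_cases hm0T' : m0 ∈ T'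
    · set C'' := T'.erase m0 with hC''
      have hC''C : C'' ⊆ C := by
        intro x hx
        have := (Finset.mem_of_mem_erase hx)
        have hxm0 : x ≠ m0 := Finset.ne_of_mem_erase hx
        rcases Finset.mem_insert.mp (hT'sub.subset this) with h | h
        · exact absurd h hxm0
        · exact h
      have hC''ne : C'' ≠ C := by
        intro h
        apply hT'sub.not_subset
        intro x hx
        rcases Finset.mem_insert.mp hx with rfl | hxC
        · exact hm0T'
        · rw [← h] at hxC
          exact Finset.mem_of_mem_erase hxC
      have hcard : C''.card < C.card :=
        Finset.card_lt_card (Finset.ssubset_iff_subset_ne.mpr ⟨hC''C, hC''ne⟩)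
      rw [depA_iff] at hT'dep
      obtain ⟨g, hgsum, j0, hj0, hj0ne⟩ := hT'dep
      have hT'eq : T' = insert m0 C'' := (Finset.insert_erase hm0T').symm
      have hm0C'' : m0 ∉ C'' := Finset.notMem_erase _ _
      rw [hT'eq, Finset.sum_insert hm0C''] at hgsum
      by_cases hgm0 : g m0 = 0
      · -- dependence inside C'' ⊆ T : contradiction with independence of T
        apply indepA_mono β (hC''C.trans hCT) hTindep
        rw [depA_iff]
        refine ⟨g, ?_, ⟨j0, ?_, hj0ne⟩⟩
        · rw [hgm0, zero_smul, zero_add] at hgsum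
          exact hgsum
        · rw [hT'eq] at hj0
          rcases Finset.mem_insert.mp hj0 with rfl | h
          · exact absurd hgm0 hj0ne
          · exact h
      · -- β m0 ∈ span C'' : contradicts minimality of C
        have hspan : β m0 ∈ Submodule.span ℝ (β '' ↑C'') := by
          rw [mem_span_image_finset_iff]
          refine ⟨fun j => -(g j) / g m0, ?_⟩
          have hβm0 : β m0 = (g m0)⁻¹ • (- ∑ j ∈ C'', g j • β j) := by
            have h0 : g m0 • β m0 = - ∑ j ∈ C'', g j • β j :=
              eq_neg_of_add_eq_zero_left hgsum
            rw [← h0, smul_smul, inv_mul_cancel₀ hgm0, one_smul]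
          rw [hβm0, ← Finset.sum_neg_distrib, Finset.smul_sum]
          apply Finset.sum_congr rfl
          intro j _
          rw [← neg_smul, smul_smul]
          congr 1
          show -g j / g m0 = (g m0)⁻¹ * -g j
          rw [div_eq_mul_inv]
          ring
        have hle := hCmin C'' (by
          rw [Finset.mem_filter, Finset.mem_powerset]
          exact ⟨hC''C.trans hCT, hspan⟩)
        omega
    · -- T' ⊆ C ⊆ T : contradiction with independence of T
      have : T' ⊆ C := by
        intro x hx
        rcases Finset.mem_insert.mp (hT'sub.subset hx) with rfl | h
        · exact absurd hx hm0T'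
        · exact h
      exact indepA_mono β (this.trans hCT) hTindep hT'dep

theorem mainA : ∀ (N : ℕ) (S T : Finset (Fin l)), S.card + T.card ≤ N →
    NBCA β S → NBCA β T →
    pr β (S.sort (· ≤ ·)) = pr β (T.sort (· ≤ ·)) → S = T := by
  intro N
  induction N with
  | zero =>
    intro S T hcard _ _ _
    have hS : S = ∅ := Finset.card_eq_zero.mp (by omega)
    have hT : T = ∅ := Finset.card_eq_zero.mp (by omega)
    rw [hS, hT]
  | succ N ih =>
    intro S T hcard hS hT h
    by_cases hST : S = T
    · exact hST
    exfalso
    have hUne : (S ∪ T).Nonempty := by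
      rcases Finset.eq_empty_or_nonempty (S ∪ T) with hU | hU
      · rw [Finset.union_eq_empty] at hU
        exact absurd (hU.1.trans hU.2.symm) hST
      · exact hU
    set m0 := (S ∪ T).max' hUne with hm0
    have hSind : ¬ DepA β S := nbcA_indep β hS
    have hTind : ¬ DepA β T := nbcA_indep β hT
    have hspan := spanA_eq β hSind hTind h
    have hm0mem := (S ∪ T).max'_mem hUne
    have hm0S : m0 ∈ S := by
      by_contra hm0S
      have hm0T : m0 ∈ T := by
        rcases Finset.mem_union.mp hm0mem with h' | h'
        · exact absurd h' hm0S
        · exact h'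
      refine bc_from_span β hS (fun j hj => ?_)
        (by rw [hspan]
            exact Submodule.subset_span ⟨m0, hm0T, rfl⟩)
      exact lt_of_le_of_ne ((S ∪ T).le_max' j (Finset.mem_union_left _ hj))
        (fun hh => hm0S (hh ▸ hj))
    have hm0T : m0 ∈ T := by
      by_contra hm0T
      refine bc_from_span β hT (fun j hj => ?_)
        (by rw [← hspan]
            exact Submodule.subset_span ⟨m0, hm0S, rfl⟩)
      exact lt_of_le_of_ne ((S ∪ T).le_max' j (Finset.mem_union_right _ hj))
        (fun hh => hm0T (hh ▸ hj))
    -- peel off the common maximum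
    have hsortS : S.sort (· ≤ ·) = (S.erase m0).sort (· ≤ ·) ++ [m0] :=
      sort_append_max hm0S (fun j hj => (S ∪ T).le_max' j (Finset.mem_union_left _ hj))
    have hsortT : T.sort (· ≤ ·) = (T.erase m0).sort (· ≤ ·) ++ [m0] :=
      sort_append_max hm0T (fun j hj => (S ∪ T).le_max' j (Finset.mem_union_right _ hj))
    rw [hsortS, hsortT, pr_append, pr_append] at h
    have h' : pr β ((S.erase m0).sort (· ≤ ·)) = pr β ((T.erase m0).sort (· ≤ ·)) :=
      mul_right_cancel h
    have hcS : 1 ≤ S.card := Finset.card_pos.mpr ⟨m0, hm0S⟩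
    have hcT : 1 ≤ T.card := Finset.card_pos.mpr ⟨m0, hm0T⟩
    have herase := ih (S.erase m0) (T.erase m0)
      (by rw [Finset.card_erase_of_mem hm0S, Finset.card_erase_of_mem hm0T]; omega)
      (nbcA_mono β (Finset.erase_subset _ _) hS)
      (nbcA_mono β (Finset.erase_subset _ _) hT) h'
    apply hST
    rw [← Finset.insert_erase hm0S, ← Finset.insert_erase hm0T, herase]

end Abstract


theorem statement_11 {n : ℕ} (P : RS n) (w : O n) (hw : w ∈ P.W)
    (ω : List (Fin P.rank)) (hred : ω.length = P.len w)
    (hw' : w = (ω.map P.s).prod)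
    (S T : Finset (Fin ω.length))
    (hS : P.wordNBC ω S) (hT : P.wordNBC ω T)
    (heq : P.wordφ ω w S = P.wordφ ω w T) : S = T := by
  have hprod : pr (P.wordβ ω) (S.sort (· ≤ ·)) = pr (P.wordβ ω) (T.sort (· ≤ ·)) := by
    have := heq
    unfold RS.wordφ at this
    exact mul_right_cancel this
  exact mainA (P.wordβ ω) (S.card + T.card) S T le_rfl hS hT hprod

end Paper
end
end

section
/- Let R = A_n be the root system with positive roots {e_i − e_j : 1 ≤ i < j ≤ n+1}, and identify a subset of R^+ with the graph on vertices 1,…,n+1 having an edge ij for each e_i − e_j in the subset. If I ⊆ R^+ is biconvex, then every chordless cycle in the corresponding graph has length at most 4. -/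
noncomputable section
namespace Paper

/-- The standard basis vector `e i`. -/
def ee (n : ℕ) (i : Fin (n + 1)) : V (n + 1) := EuclideanSpace.single i 1

/-- The positive roots of the root system `Aₙ`: `e_i - e_j` for `i < j`. -/
def posRootsA (n : ℕ) : Set (V (n + 1)) :=
  {v | ∃ i j : Fin (n + 1), i < j ∧ v = ee n i - ee n j}

/-- `I` is convex: closed under addition within the positive roots. -/
def ConvexIn (n : ℕ) (I : Set (V (n + 1))) : Prop :=
  ∀ α ∈ I, ∀ β ∈ I, α + β ∈ posRootsA n → α + β ∈ I

/-- `I` is coconvex: its complement in the positive roots is convex. -/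
def CoconvexIn (n : ℕ) (I : Set (V (n + 1))) : Prop :=
  ConvexIn n (posRootsA n \ I)

/-- The graph on vertices `1, …, n+1` with an edge `i j` for each `e_i - e_j ∈ I`. -/
def graphOf (n : ℕ) (I : Set (V (n + 1))) : SimpleGraph (Fin (n + 1)) where
  Adj i j := (i < j ∧ ee n i - ee n j ∈ I) ∨ (j < i ∧ ee n j - ee n i ∈ I)
  symm := by
    constructor
    intro i j h
    tauto
  loopless := by
    constructor
    intro i h
    rcases h with ⟨h, -⟩ | ⟨h, -⟩ <;> exact lt_irrefl i h

lemma aux_inj {V : Type*} {G : SimpleGraph V} {u v : V} (p : G.Walk u v)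
    (h : p.support.Nodup) :
    ∀ i, i ≤ p.length → ∀ j, j ≤ p.length → p.getVert i = p.getVert j → i = j := by
  induction p with
  | nil => intro i hi j hj _; simp at hi hj; omega
  | cons hadj q ih =>
    simp only [SimpleGraph.Walk.support_cons, List.nodup_cons] at h
    obtain ⟨hu, hq⟩ := h
    intro i hi j hj he
    simp only [SimpleGraph.Walk.length_cons] at hi hj
    match i, j with
    | 0, 0 => rfl
    | 0, j+1 =>
      rw [SimpleGraph.Walk.getVert_zero, SimpleGraph.Walk.getVert_cons_succ] at he
      exact absurd (SimpleGraph.Walk.mem_support_iff_exists_getVert.mpr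
        ⟨j, he.symm, by omega⟩) hu
    | i+1, 0 =>
      rw [SimpleGraph.Walk.getVert_zero, SimpleGraph.Walk.getVert_cons_succ] at he
      exact absurd (SimpleGraph.Walk.mem_support_iff_exists_getVert.mpr
        ⟨i, he, by omega⟩) hu
    | i+1, j+1 =>
      rw [SimpleGraph.Walk.getVert_cons_succ, SimpleGraph.Walk.getVert_cons_succ] at he
      have := ih hq i (by omega) j (by omega) he
      omega

lemma aux_edge {V : Type*} {G : SimpleGraph V} {u v : V} (p : G.Walk u v)
    (x y : V) (hxy : s(x, y) ∈ p.edges) :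
    ∃ i, i < p.length ∧ ((p.getVert i = x ∧ p.getVert (i+1) = y) ∨
      (p.getVert i = y ∧ p.getVert (i+1) = x)) := by
  induction p with
  | nil => simp at hxy
  | cons hadj q ih =>
    rw [SimpleGraph.Walk.edges_cons, List.mem_cons] at hxy
    rcases hxy with h | h
    · refine ⟨0, by simp, ?_⟩
      rw [Sym2.eq_iff] at h
      simp only [SimpleGraph.Walk.getVert_zero, SimpleGraph.Walk.getVert_cons_succ]
      tauto
    · obtain ⟨i, hi, hc⟩ := ih h
      exact ⟨i + 1, by simp only [SimpleGraph.Walk.length_cons]; omega,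
        by simpa only [SimpleGraph.Walk.getVert_cons_succ] using hc⟩

/-- Purely graph-theoretic core: a graph on a linear order satisfying the two
convexity-derived properties has no chordless cycle of length ≥ 5. -/
lemma cycle_short {n : ℕ} {G : SimpleGraph (Fin (n+1))}
    (hC : ∀ i j l : Fin (n+1), i < j → j < l → G.Adj i j → G.Adj j l → G.Adj i l)
    (hCC : ∀ i j l : Fin (n+1), i < j → j < l → G.Adj i l → G.Adj i j ∨ G.Adj j l)
    {a : Fin (n+1)} (c : G.Walk a a) (hc : c.IsCycle)
    (hchordless : ∀ x ∈ c.support, ∀ y ∈ c.support, G.Adj x y → s(x, y) ∈ c.edges) :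
    c.length ≤ 4 := by
  by_contra hlen
  push_neg at hlen
  set k := c.length with hk
  have hk5 : 5 ≤ k := hlen
  have kpos : 0 < k := by omega
  have hnil : ¬ c.Nil := by rw [SimpleGraph.Walk.nil_iff_length_eq]; omega
  -- the cyclic vertex function
  set v : ℕ → Fin (n+1) := fun i => c.getVert (i % k) with hv
  have hmodlt : ∀ i : ℕ, i % k < k := fun i => Nat.mod_lt _ kpos
  have hgvk : c.getVert k = c.getVert 0 := by
    rw [SimpleGraph.Walk.getVert_zero, hk, SimpleGraph.Walk.getVert_length]
  -- injectivity of getVert on [1, k]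
  have inj1 : ∀ i, 1 ≤ i → i ≤ k → ∀ j, 1 ≤ j → j ≤ k → c.getVert i = c.getVert j → i = j := by
    intro i hi1 hik j hj1 hjk he
    have hnod : c.tail.support.Nodup := by
      rw [SimpleGraph.Walk.support_tail_of_not_nil _ hnil]
      exact hc.support_nodup
    have hlt : c.tail.length + 1 = k := SimpleGraph.Walk.length_tail_add_one hnil
    have h1 : c.tail.getVert (i-1) = c.getVert i := by
      rw [SimpleGraph.Walk.getVert_tail]; congr 1; omega
    have h2 : c.tail.getVert (j-1) = c.getVert j := by
      rw [SimpleGraph.Walk.getVert_tail]; congr 1; omega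
    have := aux_inj c.tail hnod (i-1) (by omega) (j-1) (by omega) (by rw [h1, h2]; exact he)
    omega
  -- injectivity of v on [0, k)
  have hv_inj : ∀ i j, i < k → j < k → v i = v j → i = j := by
    intro i j hi hj he
    have hvi : v i = c.getVert (if i = 0 then k else i) := by
      by_cases h0 : i = 0 <;> simp [hv, h0, Nat.mod_eq_of_lt, hi, hgvk]
    have hvj : v j = c.getVert (if j = 0 then k else j) := by
      by_cases h0 : j = 0 <;> simp [hv, h0, Nat.mod_eq_of_lt, hj, hgvk]
    have := inj1 (if i = 0 then k else i) (by split <;> omega) (by split <;> omega)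
      (if j = 0 then k else j) (by split <;> omega) (by split <;> omega)
      (by rw [← hvi, ← hvj]; exact he)
    split at this <;> split at this <;> omega
  have hvmod : ∀ i, v (i % k) = v i := by
    intro i; simp only [hv]; rw [Nat.mod_eq_of_lt (hmodlt i)]
  -- getVert of successor
  have hsucc : ∀ i, c.getVert (i % k + 1) = v (i + 1) := by
    intro i
    rcases Nat.lt_or_ge (i % k + 1) k with h | h
    · have : (i + 1) % k = i % k + 1 := by
        rw [Nat.add_mod, Nat.mod_eq_of_lt (show 1 < k by omega),
          Nat.mod_eq_of_lt h]
      simp only [hv, this]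
    · have h' : i % k + 1 = k := by have := hmodlt i; omega
      have h2 : (i + 1) % k = 0 := by
        rw [Nat.add_mod, Nat.mod_eq_of_lt (show 1 < k by omega), h', Nat.mod_self]
      simp only [hv, h2]
      rw [h']
      exact hgvk
  -- adjacency along the cycle
  have hv_adj : ∀ i, G.Adj (v i) (v (i + 1)) := by
    intro i
    have := c.adj_getVert_succ (hmodlt i)
    rwa [hsucc i] at this
  -- chordlessness: adjacent implies consecutive
  have hcons : ∀ i j, G.Adj (v i) (v j) → (i + 1) % k = j % k ∨ (j + 1) % k = i % k := by
    intro i j hadj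
    have hxs : v i ∈ c.support :=
      SimpleGraph.Walk.mem_support_iff_exists_getVert.mpr ⟨i % k, rfl, Nat.le_of_lt (hmodlt i)⟩
    have hys : v j ∈ c.support :=
      SimpleGraph.Walk.mem_support_iff_exists_getVert.mpr ⟨j % k, rfl, Nat.le_of_lt (hmodlt j)⟩
    obtain ⟨l, hl, hcase⟩ := aux_edge c _ _ (hchordless _ hxs _ hys hadj)
    have hgl : c.getVert l = v l := by simp only [hv]; rw [Nat.mod_eq_of_lt hl]
    have hgl1 : c.getVert (l + 1) = v (l + 1) := by
      have := hsucc l; rwa [Nat.mod_eq_of_lt hl] at this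
    rcases hcase with ⟨h1, h2⟩ | ⟨h1, h2⟩
    · left
      have hli : l = i % k := hv_inj l (i % k) hl (hmodlt i)
        (by rw [← hgl, h1, ← hvmod i])
      have hveq : v (l + 1) = v (j % k) := by rw [← hgl1, h2, ← hvmod j]
      have h3 := hv_inj ((l+1) % k) (j % k) (hmodlt _) (hmodlt _)
        (by rw [hvmod]; exact hveq)
      rw [hli] at h3
      rw [Nat.add_mod i 1 k, Nat.mod_eq_of_lt (show 1 < k by omega)]
      exact h3
    · right
      have hlj : l = j % k := hv_inj l (j % k) hl (hmodlt j)
        (by rw [← hgl, h1, ← hvmod j])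
      have hveq : v (l + 1) = v (i % k) := by rw [← hgl1, h2, ← hvmod i]
      have h3 := hv_inj ((l+1) % k) (i % k) (hmodlt _) (hmodlt _)
        (by rw [hvmod]; exact hveq)
      rw [hlj] at h3
      rw [Nat.add_mod j 1 k, Nat.mod_eq_of_lt (show 1 < k by omega)]
      exact h3
  -- choose the minimal vertex position p
  obtain ⟨p, hp, hpmin⟩ := Finset.exists_min_image (Finset.range k) v ⟨0, Finset.mem_range.mpr kpos⟩
  rw [Finset.mem_range] at hp
  -- the re-indexed cycle
  set u : ℕ → Fin (n+1) := fun t => v (p + t) with hu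
  have hu_adj : ∀ t, G.Adj (u t) (u (t + 1)) := by
    intro t
    have := hv_adj (p + t)
    simpa only [hu, Nat.add_assoc] using this
  have hu_inj : ∀ s t, s < k → t < k → u s = u t → s = t := by
    intro s t hs ht he
    have h1 : (p + s) % k = (p + t) % k := by
      apply hv_inj <;> first
        | exact hmodlt _
        | rw [hvmod, hvmod]; exact he
    have h2 : s ≡ t [MOD k] := Nat.ModEq.add_left_cancel' p h1
    have h3 : s % k = t % k := h2
    rwa [Nat.mod_eq_of_lt hs, Nat.mod_eq_of_lt ht] at h3
  have hucons : ∀ s t, s < k → t < k → G.Adj (u s) (u t) → (s + 1) % k = t ∨ (t + 1) % k = s := by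
    intro s t hs ht hadj
    rcases hcons (p + s) (p + t) hadj with h | h
    · left
      have h2 : s + 1 ≡ t [MOD k] := by
        have hpp : p + (s + 1) ≡ p + t [MOD k] := by
          show (p + (s + 1)) % k = (p + t) % k
          rw [← Nat.add_assoc]; exact h
        exact Nat.ModEq.add_left_cancel' p hpp
      have h3 : (s + 1) % k = t % k := h2
      rwa [Nat.mod_eq_of_lt ht] at h3
    · right
      have h2 : t + 1 ≡ s [MOD k] := by
        have hpp : p + (t + 1) ≡ p + s [MOD k] := by
          show (p + (t + 1)) % k = (p + s) % k
          rw [← Nat.add_assoc]; exact h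
        exact Nat.ModEq.add_left_cancel' p hpp
      have h3 : (t + 1) % k = s % k := h2
      rwa [Nat.mod_eq_of_lt hs] at h3
  set m := u 0 with hm
  have hu_k : u k = m := by
    show v (p + k) = v p
    rw [← hvmod (p + k), Nat.add_mod_right, hvmod]
  have hm_lt : ∀ t, 1 ≤ t → t < k → m < u t := by
    intro t ht1 htk
    have hle : m ≤ u t := by
      have h1 := hpmin ((p + t) % k) (Finset.mem_range.mpr (hmodlt _))
      rw [hvmod] at h1
      exact h1
    rcases lt_or_eq_of_le hle with h | h
    · exact h
    · exact absurd (hu_inj 0 t kpos htk h) (by omega)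
  -- step (2): descents at both ends
  have h21 : u 2 < u 1 := by
    rcases lt_trichotomy (u 1) (u 2) with h | h | h
    · exfalso
      have hadj02 : G.Adj (u 0) (u 2) :=
        hC _ _ _ (hm_lt 1 (by omega) (by omega)) h (hu_adj 0) (hu_adj 1)
      rcases hucons 0 2 (by omega) (by omega) hadj02 with hh | hh
      · rw [Nat.mod_eq_of_lt (by omega : 0 + 1 < k)] at hh; omega
      · rw [Nat.mod_eq_of_lt (by omega : 2 + 1 < k)] at hh; omega
    · exact absurd (hu_inj 1 2 (by omega) (by omega) h) (by omega)
    · exact h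
  have h2k : u (k - 2) < u (k - 1) := by
    rcases lt_trichotomy (u (k - 1)) (u (k - 2)) with h | h | h
    · exfalso
      have hadj1 : G.Adj (u (k - 1)) m := by
        have := hu_adj (k - 1)
        rwa [show k - 1 + 1 = k by omega, hu_k] at this
      have hadj2 : G.Adj (u (k - 2)) (u (k - 1)) := by
        have := hu_adj (k - 2)
        rwa [show k - 2 + 1 = k - 1 by omega] at this
      have hadj0k2 : G.Adj m (u (k - 2)) :=
        hC _ _ _ (hm_lt (k - 1) (by omega) (by omega)) h hadj1.symm hadj2.symm
      rcases hucons 0 (k - 2) (by omega) (by omega) hadj0k2 with hh | hh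
      · rw [Nat.mod_eq_of_lt (by omega : 0 + 1 < k)] at hh; omega
      · rw [show k - 2 + 1 = k - 1 by omega, Nat.mod_eq_of_lt (by omega : k - 1 < k)] at hh
        omega
    · exact absurd (hu_inj (k - 1) (k - 2) (by omega) (by omega) h) (by omega)
    · exact h
  -- step (3): internal minimum
  obtain ⟨j, hjmem, hjmin⟩ := Finset.exists_min_image (Finset.Icc 2 (k - 2)) u
    ⟨2, Finset.mem_Icc.mpr (by omega)⟩
  rw [Finset.mem_Icc] at hjmem
  set w := u j with hw
  have hwa : w < u 1 :=
    lt_of_le_of_lt (hjmin 2 (Finset.mem_Icc.mpr (by omega))) h21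
  have hwb : w < u (k - 1) :=
    lt_of_le_of_lt (hjmin (k - 2) (Finset.mem_Icc.mpr (by omega))) h2k
  have hmw : m < w := hm_lt j (by omega) (by omega)
  -- adjacency m - w is impossible
  have hnot_mw : ¬ G.Adj m w := by
    intro hadj
    rcases hucons 0 j (by omega) (by omega) hadj with hh | hh
    · rw [Nat.mod_eq_of_lt (by omega : 0 + 1 < k)] at hh; omega
    · rw [Nat.mod_eq_of_lt (by omega : j + 1 < k)] at hh; omega
  -- step (4): j = 2
  have hj2 : j = 2 := by
    rcases hCC _ _ _ hmw hwa (hu_adj 0) with h | h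
    · exact absurd h hnot_mw
    · rcases hucons j 1 (by omega) (by omega) h with hh | hh
      · rw [Nat.mod_eq_of_lt (by omega : j + 1 < k)] at hh; omega
      · rw [Nat.mod_eq_of_lt (by omega : 1 + 1 < k)] at hh; omega
  -- step (5): j = k - 2
  have hjk2 : j = k - 2 := by
    have hadjm : G.Adj m (u (k - 1)) := by
      have := hu_adj (k - 1)
      rw [show k - 1 + 1 = k by omega, hu_k] at this
      exact this.symm
    rcases hCC _ _ _ hmw hwb hadjm with h | h
    · exact absurd h hnot_mw
    · rcases hucons j (k - 1) (by omega) (by omega) h with hh | hh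
      · rw [Nat.mod_eq_of_lt (by omega : j + 1 < k)] at hh; omega
      · rw [show k - 1 + 1 = k by omega, Nat.mod_self] at hh; omega
  omega

theorem statement_18 (n : ℕ) (I : Set (V (n + 1))) (hI : I ⊆ posRootsA n)
    (hconv : ConvexIn n I) (hcoconv : CoconvexIn n I)
    (a : Fin (n + 1)) (c : (graphOf n I).Walk a a) (hc : c.IsCycle)
    (hchordless : ∀ x ∈ c.support, ∀ y ∈ c.support,
      (graphOf n I).Adj x y → s(x, y) ∈ c.edges) :
    c.length ≤ 4 := by
  have mem_of_adj : ∀ i j : Fin (n + 1), i < j → (graphOf n I).Adj i j →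
      ee n i - ee n j ∈ I := by
    intro i j hij hadj
    rcases hadj with ⟨-, h⟩ | ⟨h, -⟩
    · exact h
    · exact absurd h (asymm hij)
  have hC : ∀ i j l : Fin (n+1), i < j → j < l →
      (graphOf n I).Adj i j → (graphOf n I).Adj j l → (graphOf n I).Adj i l := by
    intro i j l hij hjl h1 h2
    have m1 := mem_of_adj i j hij h1
    have m2 := mem_of_adj j l hjl h2
    have hsum : ee n i - ee n j + (ee n j - ee n l) = ee n i - ee n l :=
      sub_add_sub_cancel _ _ _
    have hpos : ee n i - ee n j + (ee n j - ee n l) ∈ posRootsA n := by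
      rw [hsum]; exact ⟨i, l, hij.trans hjl, rfl⟩
    have := hconv _ m1 _ m2 hpos
    rw [hsum] at this
    exact Or.inl ⟨hij.trans hjl, this⟩
  have hCC : ∀ i j l : Fin (n+1), i < j → j < l →
      (graphOf n I).Adj i l → (graphOf n I).Adj i j ∨ (graphOf n I).Adj j l := by
    intro i j l hij hjl hadj
    have mil := mem_of_adj i l (hij.trans hjl) hadj
    by_contra hcon
    push_neg at hcon
    obtain ⟨h1, h2⟩ := hcon
    have n1 : ee n i - ee n j ∉ I := fun h => h1 (Or.inl ⟨hij, h⟩)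
    have n2 : ee n j - ee n l ∉ I := fun h => h2 (Or.inl ⟨hjl, h⟩)
    have hsum : ee n i - ee n j + (ee n j - ee n l) = ee n i - ee n l :=
      sub_add_sub_cancel _ _ _
    have hpos : ee n i - ee n j + (ee n j - ee n l) ∈ posRootsA n := by
      rw [hsum]; exact ⟨i, l, hij.trans hjl, rfl⟩
    have := hcoconv _ ⟨⟨i, j, hij, rfl⟩, n1⟩ _ ⟨⟨j, l, hjl, rfl⟩, n2⟩ hpos
    rw [hsum] at this
    exact this.2 mil
  exact cycle_short hC hCC c hc hchordless

end Paper
end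
end
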